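/- arXiv:0712.3333 — 5 statements merged into one kernel-verified Lean document; each statement's English description precedes it below -/
import Mathlib

section
/- Every finite simple graph G that is not bipartite contains a strong edge, i.e., there exist an optimal vertex cover V⁰ of G and an edge (i,j) ∈ E with both i ∈ V⁰ and j ∈ V⁰. -/
/-- `S` is a vertex cover of `G`: every edge has at least one endpoint in `S`. -/
def IsVertexCover {V : Type*} (G : SimpleGraph V) (S : Finset V) : Prop :=
  ∀ ⦃a b : V⦄, G.Adj a b → a ∈ S ∨ b ∈ S

/-- `S` is an optimal vertex cover of `G`: a vertex cover of minimum cardinality. -/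
def IsOptimalVertexCover {V : Type*} (G : SimpleGraph V) (S : Finset V) : Prop :=
  IsVertexCover G S ∧ ∀ T : Finset V, IsVertexCover G T → S.card ≤ T.card

/-! A vertex cover containing no edge is an independent set whose complement is independent
as well, so it splits the graph into two colour classes. Hence every vertex cover of a
non-bipartite graph, in particular an optimal one, contains an edge. -/

section VertexCover

variable {V : Type*} {G : SimpleGraph V} {S : Finset V}

lemma IsVertexCover.isBipartiteWith_compl (hS : IsVertexCover G S)
    (hindep : ∀ ⦃a b : V⦄, G.Adj a b → a ∈ S → b ∉ S) :
    G.IsBipartiteWith (S : Set V) (S : Set V)ᶜ where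
  disjoint := disjoint_compl_right
  mem_of_adj a b hab := by
    rcases hS hab with ha | hb
    · exact Or.inl ⟨ha, hindep hab ha⟩
    · exact Or.inr ⟨fun ha => hindep hab ha hb, hb⟩

lemma IsVertexCover.exists_adj_of_not_isBipartite (hS : IsVertexCover G S)
    (hG : ¬ G.IsBipartite) : ∃ i j, G.Adj i j ∧ i ∈ S ∧ j ∈ S := by
  by_contra! hindep
  exact hG (hS.isBipartiteWith_compl hindep).isBipartite

lemma exists_isOptimalVertexCover [Finite V] (G : SimpleGraph V) :
    ∃ S : Finset V, IsOptimalVertexCover G S := by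
  classical
  have : Fintype V := Fintype.ofFinite V
  have huniv : IsVertexCover G Finset.univ := fun a _ _ => Or.inl (Finset.mem_univ a)
  obtain ⟨S, hS, hmin⟩ := Finset.exists_min_image {T : Finset V | IsVertexCover G T} Finset.card
    ⟨Finset.univ, by simpa using huniv⟩
  exact ⟨S, by simpa using hS, fun T hT => hmin T (by simpa using hT)⟩

end VertexCover

theorem exists_strong_edge_of_not_bipartite_general {V : Type*} [Fintype V]
    (G : SimpleGraph V) (hG : ¬ G.Colorable 2) :
    ∃ (V0 : Finset V) (i j : V), IsOptimalVertexCover G V0 ∧ G.Adj i j ∧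
      i ∈ V0 ∧ j ∈ V0 := by
  obtain ⟨S, hS⟩ := exists_isOptimalVertexCover G
  obtain ⟨i, j, hij, hi, hj⟩ := hS.1.exists_adj_of_not_isBipartite hG
  exact ⟨S, i, j, hS, hij, hi, hj⟩

/-- Every finite simple graph that is not bipartite (i.e. not 2-colorable) contains a
strong edge: an edge both of whose endpoints belong to some optimal vertex cover. -/
theorem exists_strong_edge_of_not_bipartite {V : Type*} [Fintype V] [DecidableEq V]
    (G : SimpleGraph V) (hG : ¬ G.Colorable 2) :
    ∃ (V0 : Finset V) (i j : V), IsOptimalVertexCover G V0 ∧ G.Adj i j ∧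
      i ∈ V0 ∧ j ∈ V0 :=
  exists_strong_edge_of_not_bipartite_general G hG
end

section
/- For the complete graph K_n on n ≥ 3 vertices, the optimal value of the extended linear programming relaxation ELP equals 2n/3: the point with all coordinates equal to 2/3 is feasible with objective value 2n/3, and every feasible point x satisfies Σ_{i=1}^n x_i ≥ 2n/3. -/
/-! The all-`2/3` point meets every odd-cycle constraint because a cycle has `2s + 1 ≥ 3`
vertices. Conversely, on `Fin n` the `n` cyclic triangles `{i, i + 1, i + 2}` give `n` constraints
`x_i + x_{i+1} + x_{i+2} ≥ 2`, and summing them counts every vertex exactly three times. -/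

/-- `x` is feasible for the extended LP relaxation ELP of the vertex cover problem on
`G`: `x_i + x_j ≥ 1` for every edge, `∑_{i ∈ ω} x_i ≥ s + 1` for every odd cycle `ω`
of `G` with `2s + 1` vertices, and `x_i ≥ 0` for all `i`. -/
def ELPFeasible {V : Type*} [DecidableEq V] (G : SimpleGraph V) (x : V → ℝ) : Prop :=
  (∀ i : V, 0 ≤ x i) ∧
  (∀ ⦃i j : V⦄, G.Adj i j → 1 ≤ x i + x j) ∧
  ∀ (s : ℕ) (v : V) (c : G.Walk v v), c.IsCycle → c.length = 2 * s + 1 →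
    (s : ℝ) + 1 ≤ ∑ k ∈ c.support.tail.toFinset, x k

open SimpleGraph Finset

section

variable {V : Type*} [DecidableEq V]

lemma elpFeasible_const_two_thirds (G : SimpleGraph V) : ELPFeasible G fun _ => (2 : ℝ) / 3 := by
  refine ⟨fun _ => by norm_num, fun _ _ _ => by norm_num, fun s v c hc hlen => ?_⟩
  have hcard : #c.support.tail.toFinset = 2 * s + 1 := by
    rw [List.toFinset_card_of_nodup hc.support_nodup, List.length_tail, Walk.length_support, hlen,
      Nat.add_sub_cancel]
  have hs : (1 : ℝ) ≤ s := by
    have := hc.three_le_length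
    exact_mod_cast (by omega : 1 ≤ s)
  rw [sum_const, hcard, nsmul_eq_mul]
  push_cast
  linarith

lemma ELPFeasible.two_le_add_add {G : SimpleGraph V} {x : V → ℝ} (hx : ELPFeasible G x)
    {a b c : V} (hab : G.Adj a b) (hbc : G.Adj b c) (hca : G.Adj c a) : 2 ≤ x a + x b + x c := by
  let w : G.Walk a a := .cons hab (.cons hbc (.cons hca .nil))
  have hw : w.IsCycle := by
    simp [w, Walk.cons_isCycle_iff, hab.ne, hbc.ne, hca.ne, hab.ne.symm, hca.ne.symm]
  have hsum : ∑ k ∈ w.support.tail.toFinset, x k = x b + x c + x a := by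
    simp only [w, Walk.support_cons, Walk.support_nil, List.tail_cons, List.toFinset_cons,
      List.toFinset_nil, insert_empty_eq, sum_insert, mem_insert, mem_singleton, sum_singleton,
      hbc.ne, hab.ne.symm, hca.ne, or_self, not_false_eq_true]
    ring
  have := hx.2.2 1 a w hw rfl
  push_cast at this
  linarith

end

lemma card_mul_le_three_mul_sum {A : Type*} [AddGroup A] [Fintype A] {x : A → ℝ} {r : ℝ}
    (a b : A) (h : ∀ i, r ≤ x i + x (i + a) + x (i + b)) : Fintype.card A * r ≤ 3 * ∑ i, x i := by
  calc Fintype.card A * r = ∑ _i : A, r := by simp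
    _ ≤ ∑ i, (x i + x (i + a) + x (i + b)) := sum_le_sum fun i _ => h i
    _ = 3 * ∑ i, x i := by
      have shift (c : A) : ∑ i, x (i + c) = ∑ i, x i := Equiv.sum_comp (Equiv.addRight c) x
      rw [sum_add_distrib, sum_add_distrib, shift, shift]
      ring

lemma ELPFeasible.two_mul_le_three_mul_sum_of_top {m : ℕ} {x : Fin (m + 3) → ℝ}
    (hx : ELPFeasible ⊤ x) : 2 * (m + 3 : ℝ) ≤ 3 * ∑ i, x i := by
  have h2 : 2 % (m + 3) = 2 := Nat.mod_eq_of_lt (by omega)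
  have h20 : (2 : Fin (m + 3)) ≠ 0 := by simp [Fin.ext_iff, h2]
  have h12 : (1 : Fin (m + 3)) ≠ 2 := by simp [Fin.ext_iff, h2]
  have := card_mul_le_three_mul_sum 1 2 fun i =>
    hx.two_le_add_add (a := i) (by simp) (by simp [h12]) (by simp [h20])
  simpa [mul_comm] using this

/-- For the complete graph `K_n` (`n ≥ 3`), the optimal value of the extended LP
relaxation ELP equals `2n / 3`: the all-`2/3` point is feasible with objective value
`2n / 3`, and every feasible point has objective value at least `2n / 3`. -/
theorem completeGraph_elp_value (n : ℕ) (hn : 3 ≤ n) :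
    ELPFeasible (⊤ : SimpleGraph (Fin n)) (fun _ => (2 : ℝ) / 3) ∧
    (∑ i : Fin n, (2 : ℝ) / 3) = 2 * n / 3 ∧
    ∀ x : Fin n → ℝ, ELPFeasible (⊤ : SimpleGraph (Fin n)) x →
      2 * (n : ℝ) / 3 ≤ ∑ i : Fin n, x i := by
  refine ⟨elpFeasible_const_two_thirds ⊤, by
    rw [sum_const, card_univ, Fintype.card_fin, nsmul_eq_mul]; ring, fun x hx => ?_⟩
  obtain ⟨m, rfl⟩ : ∃ m, n = m + 3 := ⟨n - 3, by omega⟩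
  have := hx.two_mul_le_three_mul_sum_of_top
  push_cast
  linarith
end

section
/- For the complete graph K_n on n ≥ 3 vertices and any edge (r,s), the optimal value of the restricted extended LP relaxation RELP(r,s) equals n−1: every feasible point x satisfies Σ_{i=1}^n x_i ≥ n−1, and the incidence vector of the vertex cover V \ {s} (which has x_r = 1, x_s = 0, x_k = 1 for k ≠ r,s) is feasible with objective value n−1. -/
/-- `x` is feasible for the restricted extended LP relaxation RELP(r,s) on `G`:
`x_i + x_j ≥ 1` for every edge `(i,j) ∈ E \ {(r,s)}`, `x_r + x_s = 1`, the odd-cycle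
inequalities, and `x_i ≥ 0` for all `i`. -/
def RELPFeasible {V : Type*} [DecidableEq V] (G : SimpleGraph V) (r s : V)
    (x : V → ℝ) : Prop :=
  (∀ i : V, 0 ≤ x i) ∧
  (∀ ⦃i j : V⦄, G.Adj i j → ¬(i = r ∧ j = s) → ¬(i = s ∧ j = r) → 1 ≤ x i + x j) ∧
  x r + x s = 1 ∧
  ∀ (m : ℕ) (v : V) (c : G.Walk v v), c.IsCycle → c.length = 2 * m + 1 →
    (m : ℝ) + 1 ≤ ∑ k ∈ c.support.tail.toFinset, x k

/-!
Every vertex `k ≠ r, s` of `K_n` spans a triangle with `r` and `s`; the odd-cycle inequality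
`x_r + x_s + x_k ≥ 2` together with `x_r + x_s = 1` forces `x_k ≥ 1`, so `Σ x ≥ 1 + (n - 2)`.
Conversely, the indicator of `V \ {s}` satisfies every edge inequality because no edge has both
ends at `s`, and every odd cycle of length `2m + 1` has at least `2m ≥ m + 1` vertices other
than `s`.
-/

open SimpleGraph Finset

namespace SimpleGraph.Walk

variable {V : Type*} {G : SimpleGraph V}

theorem isCycle_triangle {a b c : V} (hab : G.Adj a b) (hbc : G.Adj b c) (hca : G.Adj c a) :
    (cons hab (cons hbc (cons hca nil))).IsCycle := by
  simp [cons_isCycle_iff, cons_isPath_iff, hab.ne, hbc.ne, hca.ne, hab.ne.symm, hca.ne.symm]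

theorem IsCycle.card_support_tail_toFinset [DecidableEq V] {v : V} {p : G.Walk v v}
    (hp : p.IsCycle) : #p.support.tail.toFinset = p.length := by
  rw [List.toFinset_card_of_nodup hp.support_nodup, List.length_tail, length_support]
  rfl

end SimpleGraph.Walk

theorem Finset.sum_ite_eq_zero_one {α : Type*} [DecidableEq α] (T : Finset α) (s : α) :
    ∑ k ∈ T, (if k = s then (0 : ℝ) else 1) = #(T.erase s) := by
  rw [sum_ite, sum_const_zero, sum_const, nsmul_one, zero_add, filter_ne']

namespace RELPFeasible

variable {V : Type*} [DecidableEq V] {G : SimpleGraph V} {r s : V} {x : V → ℝ}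

theorem one_le_of_triangle (hx : RELPFeasible G r s x) {k : V} (hrs : G.Adj r s)
    (hsk : G.Adj s k) (hkr : G.Adj k r) : 1 ≤ x k := by
  have htri := hx.2.2.2 1 r _ (Walk.isCycle_triangle hrs hsk hkr) rfl
  rw [List.sum_toFinset _ (Walk.isCycle_triangle hrs hsk hkr).support_nodup] at htri
  simp only [Walk.support_cons, Walk.support_nil, List.tail_cons, List.map_cons, List.map_nil,
    List.sum_cons, List.sum_nil, Nat.cast_one] at htri
  linarith [hx.2.2.1]

theorem card_sub_one_le_sum [Fintype V] (hx : RELPFeasible G r s x) (hrs : G.Adj r s)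
    (hcommon : ∀ k, k ≠ r → k ≠ s → G.Adj s k ∧ G.Adj k r) :
    (Fintype.card V : ℝ) - 1 ≤ ∑ i, x i := by
  set W := (univ.erase r).erase s
  have hW : (#W : ℝ) + 1 + 1 = Fintype.card V := by
    rw [← card_univ, ← card_erase_add_one (mem_univ r),
      ← card_erase_add_one (s := univ.erase r) (by simpa using hrs.ne.symm)]
    push_cast
    rfl
  have hsum : ∑ i, x i = x r + x s + ∑ i ∈ W, x i := by
    rw [← add_sum_erase _ _ (mem_univ r), ← add_sum_erase _ _ (by simpa using hrs.ne.symm),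
      add_assoc]
  have hrest : (#W : ℝ) ≤ ∑ i ∈ W, x i := by
    simpa using card_nsmul_le_sum W x 1 fun k hk => by
      obtain ⟨hks, hkr⟩ := by simpa [W] using hk
      exact hx.one_le_of_triangle hrs (hcommon k hkr hks).1 (hcommon k hkr hks).2
  linarith [hx.2.2.1]

end RELPFeasible

theorem relpFeasible_ite_eq_zero_one {V : Type*} [DecidableEq V] (G : SimpleGraph V) {r s : V}
    (hrs : r ≠ s) : RELPFeasible G r s (fun k => if k = s then 0 else 1) := by
  refine ⟨fun i => by positivity, fun i j hij _ _ => ?_, by simp [hrs], fun m _ c hc hlen => ?_⟩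
  · have := hij.ne
    grind
  · have hm : 1 ≤ m := by have := hc.three_le_length; omega
    have hcard := hc.card_support_tail_toFinset
    have := pred_card_le_card_erase (s := c.support.tail.toFinset) (a := s)
    rw [sum_ite_eq_zero_one]
    exact_mod_cast (by omega : m + 1 ≤ #(c.support.tail.toFinset.erase s))

theorem completeGraph_relp_value_general (n : ℕ) (r s : Fin n) (hrs : r ≠ s) :
    (∀ x : Fin n → ℝ, RELPFeasible (⊤ : SimpleGraph (Fin n)) r s x →
      (n : ℝ) - 1 ≤ ∑ i : Fin n, x i) ∧
    RELPFeasible (⊤ : SimpleGraph (Fin n)) r s (fun k => if k = s then 0 else 1) ∧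
    (∑ i : Fin n, (if i = s then (0 : ℝ) else 1)) = n - 1 := by
  refine ⟨fun x hx => ?_, relpFeasible_ite_eq_zero_one ⊤ hrs, ?_⟩
  · simpa using hx.card_sub_one_le_sum (by simpa using hrs)
      fun k hkr hks => ⟨by simpa using (Ne.symm hks), by simpa using hkr⟩
  · rw [sum_ite_eq_zero_one, card_erase_of_mem (mem_univ s), card_univ, Fintype.card_fin,
      Nat.cast_pred (Fin.pos s)]

/-- For the complete graph `K_n` (`n ≥ 3`) and any edge `(r,s)`, the optimal value of
RELP(r,s) equals `n - 1`: every feasible point has objective value at least `n - 1`,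
and the incidence vector of the vertex cover `V \ {s}` (with `x_r = 1`, `x_s = 0`,
`x_k = 1` for `k ≠ r, s`) is feasible with objective value `n - 1`. -/
theorem completeGraph_relp_value (n : ℕ) (hn : 3 ≤ n) (r s : Fin n) (hrs : r ≠ s) :
    (∀ x : Fin n → ℝ, RELPFeasible (⊤ : SimpleGraph (Fin n)) r s x →
      (n : ℝ) - 1 ≤ ∑ i : Fin n, x i) ∧
    RELPFeasible (⊤ : SimpleGraph (Fin n)) r s (fun k => if k = s then 0 else 1) ∧
    (∑ i : Fin n, (if i = s then (0 : ℝ) else 1)) = n - 1 :=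
  completeGraph_relp_value_general n r s hrs
end

section
/- Let n ≥ 3 and let (i,j) be any edge of the complete graph K_n. Every optimal extreme point x⁰ of the feasible region of RELP(i,j) on K_n is a 0–1 vector, and the set {k : x⁰_k = 1} is an optimal vertex cover of K_n (of cardinality n−1). -/
/-- `S` is a vertex cover of `G`: every edge has at least one endpoint in `S`. -/
def IsVertexCoverSet {V : Type*} (G : SimpleGraph V) (S : Set V) : Prop :=
  ∀ ⦃a b : V⦄, G.Adj a b → a ∈ S ∨ b ∈ S

/-- `S` is an optimal vertex cover of `G`: a vertex cover of minimum cardinality. -/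
def IsOptimalVertexCoverSet {V : Type*} (G : SimpleGraph V) (S : Set V) : Prop :=
  IsVertexCoverSet G S ∧ ∀ T : Set V, IsVertexCoverSet G T → S.ncard ≤ T.ncard

/-! On `K_n` every vertex `k ∉ {i, j}` spans a triangle with `i` and `j`; its odd-cycle inequality
together with `x_i + x_j = 1` forces `x_k ≥ 1`. Conversely, a nonnegative `x` with
`x_i + x_j = 1` and `x_k = 1` elsewhere is feasible, since on an odd cycle it falls short of the
cycle length by at most `1`. Hence an optimal `x⁰` equals `1` off `{i, j}`. Unless `x⁰_i` or
`x⁰_j` vanishes, `x⁰` is the midpoint of the two feasible points obtained by shifting mass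
`±ε` between `i` and `j`, so an extreme optimal `x⁰` is the indicator of the complement of a
single vertex, which is an optimal vertex cover of `K_n`. -/

open SimpleGraph Finset

section

variable {V : Type*} [DecidableEq V] {G : SimpleGraph V} {r s : V} {x : V → ℝ}

theorem card_sub_one_le_sum_of_eq_one_off (hrs : r ≠ s) (h0 : ∀ k, 0 ≤ x k)
    (hsum : x r + x s = 1) (h1 : ∀ k, k ≠ r → k ≠ s → x k = 1) (S : Finset V) :
    (#S : ℝ) - 1 ≤ ∑ k ∈ S, x k := by
  have hdef_nonneg : ∀ k, 0 ≤ 1 - x k := by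
    intro k
    by_cases hkr : k = r
    · rw [hkr]; linarith [h0 s]
    by_cases hks : k = s
    · rw [hks]; linarith [h0 r]
    rw [h1 k hkr hks, sub_self]
  -- The deficit `1 - x` vanishes off `{r, s}`, where it sums to `1`.
  have hdef : ∑ k ∈ S, (1 - x k) ≤ 1 :=
    calc ∑ k ∈ S, (1 - x k) ≤ ∑ k ∈ S ∪ {r, s}, (1 - x k) :=
          sum_le_sum_of_subset_of_nonneg subset_union_left fun k _ _ ↦ hdef_nonneg k
      _ = ∑ k ∈ {r, s}, (1 - x k) := by
          refine (sum_subset subset_union_right fun k _ hk ↦ ?_).symm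
          simp only [mem_insert, mem_singleton, not_or] at hk
          rw [h1 k hk.1 hk.2, sub_self]
      _ = 1 := by rw [sum_pair hrs]; linarith
  rw [sum_sub_distrib, sum_const, nsmul_one] at hdef
  linarith

theorem relpFeasible_of_eq_one_off (hrs : r ≠ s) (h0 : ∀ k, 0 ≤ x k)
    (hsum : x r + x s = 1) (h1 : ∀ k, k ≠ r → k ≠ s → x k = 1) : RELPFeasible G r s x := by
  refine ⟨h0, fun a b hab hnrs hnsr ↦ ?_, hsum, fun m v c hc hlen ↦ ?_⟩
  · by_cases har : a = r
    · linarith [h0 a, h1 b (by rintro rfl; exact hab.ne har) fun hbs ↦ hnrs ⟨har, hbs⟩]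
    by_cases has : a = s
    · linarith [h0 a, h1 b (fun hbr ↦ hnsr ⟨has, hbr⟩) (by rintro rfl; exact hab.ne has)]
    linarith [h1 a har has, h0 b]
  · have hcard : #c.support.tail.toFinset = 2 * m + 1 := by
      rw [List.toFinset_card_of_nodup hc.support_nodup, List.length_tail, Walk.length_support,
        hlen, Nat.add_sub_cancel]
    have hm : 1 ≤ m := by have := hc.three_le_length; omega
    have := card_sub_one_le_sum_of_eq_one_off hrs h0 hsum h1 c.support.tail.toFinset
    rw [hcard] at this
    push_cast at this
    have : (1 : ℝ) ≤ m := by exact_mod_cast hm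
    linarith

namespace RELPFeasible

theorem two_le_add_add (hx : RELPFeasible G r s x) {a b c : V}
    (hab : G.Adj a b) (hbc : G.Adj b c) (hca : G.Adj c a) : 2 ≤ x a + x b + x c := by
  let c3 : G.Walk a a := .cons hab (.cons hbc (.cons hca .nil))
  have hcyc : c3.IsCycle := by
    simp [c3, Walk.cons_isCycle_iff, hab.ne, hbc.ne, hca.ne, hab.ne.symm, hca.ne.symm]
  have h := hx.2.2.2 1 a c3 hcyc rfl
  have hsupp : c3.support.tail.toFinset = {a, b, c} := by
    ext; simp [c3]; tauto
  rw [hsupp, sum_insert (by simp [hab.ne, hca.ne.symm]), sum_pair hbc.ne] at h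
  push_cast at h
  linarith

theorem one_le_of_ne (hx : RELPFeasible ⊤ r s x) (hrs : r ≠ s) {k : V} (hkr : k ≠ r)
    (hks : k ≠ s) : 1 ≤ x k := by
  linarith [hx.2.2.1, hx.two_le_add_add ((top_adj _ _).2 hrs) ((top_adj _ _).2 hks.symm)
    ((top_adj _ _).2 hkr)]

theorem eq_one_of_forall_sum_le [Fintype V] (hx : RELPFeasible ⊤ r s x) (hrs : r ≠ s)
    (hopt : ∀ y, RELPFeasible ⊤ r s y → ∑ k, x k ≤ ∑ k, y k) {k : V} (hkr : k ≠ r)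
    (hks : k ≠ s) : x k = 1 := by
  -- Lowering every coordinate off `{r, s}` to `1` keeps feasibility.
  let y : V → ℝ := fun k ↦ if k = r ∨ k = s then x k else 1
  have hy : RELPFeasible ⊤ r s y := by
    refine relpFeasible_of_eq_one_off hrs (fun k ↦ ?_) (by simpa [y] using hx.2.2.1)
      fun k hkr hks ↦ by simp [y, hkr, hks]
    unfold y; split_ifs
    exacts [hx.1 k, zero_le_one]
  have hyx : ∀ k ∈ univ, y k ≤ x k := by
    intro k _
    unfold y; split_ifs with h
    · exact le_rfl
    · rw [not_or] at h; exact hx.one_le_of_ne hrs h.1 h.2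
  have := (sum_eq_sum_iff_of_le hyx).1 ((sum_le_sum hyx).antisymm (hopt y hy)) k (mem_univ k)
  simpa [y, hkr, hks] using this.symm

theorem eq_zero_or_eq_zero_of_mem_extremePoints (hrs : r ≠ s)
    (hx : x ∈ Set.extremePoints ℝ {x | RELPFeasible G r s x})
    (h1 : ∀ k, k ≠ r → k ≠ s → x k = 1) : x r = 0 ∨ x s = 0 := by
  have hfeas : RELPFeasible G r s x := hx.1
  by_contra! h
  set ε := min (x r) (x s)
  have hε : 0 < ε := lt_min ((hfeas.1 r).lt_of_ne' h.1) ((hfeas.1 s).lt_of_ne' h.2)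
  let d : V → ℝ := Pi.single r ε - Pi.single s ε
  have hpert : ∀ t : ℝ, |t| ≤ 1 → RELPFeasible G r s (x + t • d) := by
    intro t ht
    have htε : |t * ε| ≤ ε := by
      rw [abs_mul, abs_of_pos hε]; exact mul_le_of_le_one_left hε.le ht
    obtain ⟨hlo, hhi⟩ := abs_le.1 htε
    refine relpFeasible_of_eq_one_off hrs (fun k ↦ ?_) ?_ fun k hkr hks ↦ ?_
    · by_cases hkr : k = r
      · subst hkr; simp [d, hrs]; linarith [min_le_left (x k) (x s)]
      by_cases hks : k = s
      · subst hks; simp [d, hkr]; linarith [min_le_right (x r) (x k)]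
      simp [d, hkr, hks, hfeas.1 k]
    · simp [d, hrs, hrs.symm]; linarith [hfeas.2.2.1]
    · simp [d, hkr, hks, h1 k hkr hks]
  have hmid := mem_openSegment_add_sub (𝕜 := ℝ) x d
  have := congrFun (hx.2 (by simpa using hpert 1 (by simp))
    (by simpa [sub_eq_add_neg] using hpert (-1) (by simp)) hmid) r
  simp [d, hrs.symm] at this
  exact hε.ne' this

theorem exists_eq_ite_of_mem_extremePoints (hrs : r ≠ s)
    (hx : x ∈ Set.extremePoints ℝ {x | RELPFeasible G r s x})
    (h1 : ∀ k, k ≠ r → k ≠ s → x k = 1) : ∃ v, ∀ k, x k = if k = v then 0 else 1 := by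
  have hsum : x r + x s = 1 := hx.1.2.2.1
  rcases eq_zero_or_eq_zero_of_mem_extremePoints hrs hx h1 with h | h
  · refine ⟨r, fun k ↦ ?_⟩
    by_cases hkr : k = r
    · simp [hkr, h]
    by_cases hks : k = s
    · simp [hks, hrs.symm]; linarith
    simp [hkr, h1 k hkr hks]
  · refine ⟨s, fun k ↦ ?_⟩
    by_cases hks : k = s
    · simp [hks, h]
    by_cases hkr : k = r
    · simp [hkr, hrs]; linarith
    simp [hks, h1 k hkr hks]

end RELPFeasible

end

theorem isOptimalVertexCoverSet_top_compl_singleton {V : Type*} [Finite V] (v : V) :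
    IsOptimalVertexCoverSet (⊤ : SimpleGraph V) {v}ᶜ := by
  refine ⟨fun a b hab ↦ ?_, fun T hT ↦ ?_⟩
  · by_contra! h
    simp only [Set.mem_compl_iff, Set.mem_singleton_iff, not_not] at h
    exact hab.ne (h.1.trans h.2.symm)
  · have hTc : Tᶜ.ncard ≤ 1 := (Set.ncard_le_one_iff).2 fun {a b} ha hb ↦ by
      by_contra hab
      rcases hT ((top_adj a b).2 hab) with h | h
      exacts [ha h, hb h]
    have := Set.ncard_add_ncard_compl T
    rw [Set.ncard_compl, Set.ncard_singleton]
    omega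

theorem completeGraph_relp_extremePoint_general (n : ℕ) (i j : Fin n)
    (hij : i ≠ j) (x0 : Fin n → ℝ)
    (hext : x0 ∈ Set.extremePoints ℝ
      {x : Fin n → ℝ | RELPFeasible (⊤ : SimpleGraph (Fin n)) i j x})
    (hopt : ∀ y : Fin n → ℝ, RELPFeasible (⊤ : SimpleGraph (Fin n)) i j y →
      ∑ k : Fin n, x0 k ≤ ∑ k : Fin n, y k) :
    (∀ k : Fin n, x0 k = 0 ∨ x0 k = 1) ∧
    IsOptimalVertexCoverSet (⊤ : SimpleGraph (Fin n)) {k : Fin n | x0 k = 1} ∧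
    {k : Fin n | x0 k = 1}.ncard = n - 1 := by
  have hone : ∀ k, k ≠ i → k ≠ j → x0 k = 1 := fun k ↦
    RELPFeasible.eq_one_of_forall_sum_le hext.1 hij hopt
  obtain ⟨v, hv⟩ := RELPFeasible.exists_eq_ite_of_mem_extremePoints hij hext hone
  have hset : {k | x0 k = 1} = {v}ᶜ := by
    ext k
    rw [Set.mem_ofPred_eq, hv k]
    split_ifs with hk <;> simp [hk]
  refine ⟨fun k ↦ ?_, hset ▸ isOptimalVertexCoverSet_top_compl_singleton v, ?_⟩
  · rw [hv k]
    split_ifs <;> simp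
  · rw [hset, Set.ncard_compl, Set.ncard_singleton, Nat.card_eq_fintype_card, Fintype.card_fin]

/-- For `n ≥ 3` and any edge `(i,j)` of `K_n`, every optimal extreme point `x⁰` of the
feasible region of RELP(i,j) on `K_n` is a 0–1 vector, and `{k : x⁰_k = 1}` is an
optimal vertex cover of `K_n`, of cardinality `n - 1`. -/
theorem completeGraph_relp_extremePoint (n : ℕ) (hn : 3 ≤ n) (i j : Fin n)
    (hij : i ≠ j) (x0 : Fin n → ℝ)
    (hext : x0 ∈ Set.extremePoints ℝ
      {x : Fin n → ℝ | RELPFeasible (⊤ : SimpleGraph (Fin n)) i j x})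
    (hopt : ∀ y : Fin n → ℝ, RELPFeasible (⊤ : SimpleGraph (Fin n)) i j y →
      ∑ k : Fin n, x0 k ≤ ∑ k : Fin n, y k) :
    (∀ k : Fin n, x0 k = 0 ∨ x0 k = 1) ∧
    IsOptimalVertexCoverSet (⊤ : SimpleGraph (Fin n)) {k : Fin n | x0 k = 1} ∧
    {k : Fin n | x0 k = 1}.ncard = n - 1 :=
  completeGraph_relp_extremePoint_general n i j hij x0 hext hopt
end

section
/- Let G = (V,E) be a finite simple graph and let P = {x ∈ ℝ^V : x_i + x_j ≥ 1 for every edge (i,j) ∈ E, and x_i ≥ 0 for all i ∈ V} be the feasible region of the LP relaxation of the vertex cover problem. Then every extreme point x* of P satisfies x*_i ∈ {0, 1/2, 1} for all i ∈ V. -/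
/-!
Move every coordinate of `x` that is not `0`, `1/2` or `1` by `±ε`, away from `1/2`.
An edge constraint that is tight at `x` has endpoints `t` and `1 - t`, which move in opposite
directions, so it stays tight; every other constraint is slack and survives a small perturbation.
Hence `x ± ε d` both lie in the polytope, and extremality forces `d = 0`.
-/

open Filter Topology

section ExtremePoints

variable {𝕜 E : Type*} [Field 𝕜] [LinearOrder 𝕜] [IsStrictOrderedRing 𝕜] [AddCommGroup E]
  [Module 𝕜 E] {A : Set E} {x y : E}

theorem eq_zero_of_add_mem_of_sub_mem_of_mem_extremePoints (hx : x ∈ A.extremePoints 𝕜)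
    (hadd : x + y ∈ A) (hsub : x - y ∈ A) : y = 0 := by
  have : Invertible (2 : 𝕜) := invertibleOfNonzero two_ne_zero
  simpa using ((mem_extremePoints.1 hx).2 _ hadd _ hsub (mem_openSegment_add_sub x y)).1

end ExtremePoints

theorem eq_zero_of_eventually_add_smul_mem_of_mem_extremePoints {E : Type*} [AddCommGroup E]
    [Module ℝ E] {A : Set E} {x d : E} (hx : x ∈ A.extremePoints ℝ)
    (h : ∀ᶠ ε in 𝓝 (0 : ℝ), x + ε • d ∈ A) : d = 0 := by
  have h' : ∀ᶠ ε in 𝓝 (0 : ℝ), x - ε • d ∈ A := by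
    simpa [sub_eq_add_neg] using (continuous_neg.tendsto' (0 : ℝ) 0 neg_zero).eventually h
  obtain ⟨ε, ⟨hadd, hsub⟩, hε⟩ :=
    ((h.and h').filter_mono nhdsWithin_le_nhds |>.and (self_mem_nhdsWithin (s := {0}ᶜ))).exists
  exact (smul_eq_zero.1 <| eq_zero_of_add_mem_of_sub_mem_of_mem_extremePoints hx hadd hsub)
    |>.resolve_left hε

theorem eventually_nhds_zero_le_add_mul {a b c : ℝ} (h : c ≤ a) (hb : b ≠ 0 → c < a) :
    ∀ᶠ ε in 𝓝 (0 : ℝ), c ≤ a + ε * b := by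
  by_cases hb0 : b = 0
  · simp [hb0, h]
  · have : Tendsto (fun ε : ℝ => a + ε * b) (𝓝 0) (𝓝 a) :=
      (continuous_const.add (continuous_id.mul continuous_const)).tendsto' 0 a (by simp)
    exact (this.eventually_const_lt (hb hb0)).mono fun _ => le_of_lt

noncomputable def halfIntegralShift (t : ℝ) : ℝ :=
  if t = 0 ∨ t = 1 then 0 else Real.sign (t - 1 / 2)

theorem halfIntegralShift_eq_zero_iff {t : ℝ} :
    halfIntegralShift t = 0 ↔ t = 0 ∨ t = 1 / 2 ∨ t = 1 := by
  unfold halfIntegralShift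
  split_ifs with h
  · tauto
  · rw [Real.sign_eq_zero_iff, sub_eq_zero]
    tauto

theorem halfIntegralShift_one_sub (t : ℝ) : halfIntegralShift (1 - t) = -halfIntegralShift t := by
  unfold halfIntegralShift
  rw [show 1 - t - 1 / 2 = -(t - 1 / 2) by ring, Real.sign_neg]
  split_ifs with h₁ h₂ h₂
  · simp
  · grind
  · grind
  · rfl

section VertexCover

def vertexCoverPolytope {V : Type*} (G : SimpleGraph V) : Set (V → ℝ) :=
  {y | (∀ i, 0 ≤ y i) ∧ ∀ ⦃i j⦄, G.Adj i j → 1 ≤ y i + y j}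

variable {V : Type*} [Finite V] {G : SimpleGraph V} {x : V → ℝ}

theorem eventually_add_smul_halfIntegralShift_mem (hx : x ∈ vertexCoverPolytope G) :
    ∀ᶠ ε in 𝓝 (0 : ℝ), x + ε • (halfIntegralShift ∘ x) ∈ vertexCoverPolytope G := by
  obtain ⟨hnonneg, hedge⟩ := hx
  refine (eventually_all.2 fun i => ?_).and (eventually_all.2 fun i => eventually_all.2 fun j =>
    eventually_imp_distrib_left.2 fun hij => ?_)
  · simpa using eventually_nhds_zero_le_add_mul (hnonneg i) fun h =>
      (hnonneg i).lt_of_ne' fun h0 => h (halfIntegralShift_eq_zero_iff.2 (Or.inl h0))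
  · have htight : x i + x j = 1 →
        halfIntegralShift (x i) + halfIntegralShift (x j) = 0 := fun htight => by
      rw [show x j = 1 - x i by linarith, halfIntegralShift_one_sub, add_neg_cancel]
    simpa [mul_add, add_add_add_comm] using eventually_nhds_zero_le_add_mul (hedge hij)
      fun h => (hedge hij).lt_of_ne fun heq => h (htight heq.symm)

end VertexCover

/-- Every extreme point of the feasible region
`P = {x : x_i + x_j ≥ 1 for every edge (i,j), x_i ≥ 0 for all i}` of the LP relaxation
of the vertex cover problem on a finite simple graph `G` is half-integral: each of its
coordinates is `0`, `1/2`, or `1`. -/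
theorem lp_extremePoint_half_integral {V : Type*} [Fintype V] (G : SimpleGraph V)
    (x : V → ℝ)
    (hx : x ∈ Set.extremePoints ℝ
      {y : V → ℝ | (∀ i : V, 0 ≤ y i) ∧ ∀ ⦃i j : V⦄, G.Adj i j → 1 ≤ y i + y j}) :
    ∀ i : V, x i = 0 ∨ x i = 1 / 2 ∨ x i = 1 := by
  have hshift : halfIntegralShift ∘ x = 0 :=
    eq_zero_of_eventually_add_smul_mem_of_mem_extremePoints hx
      (eventually_add_smul_halfIntegralShift_mem hx.1)
  exact fun i => halfIntegralShift_eq_zero_iff.1 (congrFun hshift i)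
end
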